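/- arXiv:2109.14507 — 2 statements merged into one kernel-verified Lean document; each statement's English description precedes it below -/
import Mathlib

section
/- Let Θ be an invertible skew-symmetric real 4×4 matrix and let f, g : ℝ⁴ → ℂ be Schwartz functions. Then for every z ∈ ℝ⁴, (f ×_Θ g)(z) = (2π)^{-4} ∫_{ℝ⁴} f(z + Θη) (Fg)(η) e^{i B(η,z)} dη, where the integral on the right-hand side converges absolutely. -/
noncomputable section

open MeasureTheory Filter Matrix

/-- ℝ⁴ as a Euclidean space. -/
abbrev V4 : Type := EuclideanSpace ℝ (Fin 4)

/-- The Minkowski bilinear form B(x,y) = -x⁰y⁰ + x¹y¹ + x²y² + x³y³. -/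
def minkB (x y : V4) : ℝ := -(x 0 * y 0) + x 1 * y 1 + x 2 * y 2 + x 3 * y 3

/-- Matrix–vector multiplication Θx on ℝ⁴. -/
def thetaAct (Θ : Matrix (Fin 4) (Fin 4) ℝ) (x : V4) : V4 :=
  WithLp.toLp 2 (fun i => ∑ j, Θ i j * x j)

/-- The constant (2π)⁻⁴ as a complex number. -/
def c4 : ℂ := ((((2 * Real.pi) ^ 4)⁻¹ : ℝ) : ℂ)

/-- The Rieffel product (f ×_Θ g)(z) = (2π)⁻⁴ ∬ f(z+Θx) g(z+y) e^{-i B(x,y)} dx dy. -/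
def rieffel (Θ : Matrix (Fin 4) (Fin 4) ℝ) (f g : V4 → ℂ) (z : V4) : ℂ :=
  c4 * ∫ p : V4 × V4, f (z + thetaAct Θ p.1) * g (z + p.2) *
    Complex.exp (-Complex.I * (minkB p.1 p.2 : ℂ))

/-- The Minkowski Fourier transform (Fg)(ξ) = ∫ g(x) e^{-i B(ξ,x)} dx. -/
def minkFT (g : V4 → ℂ) (ξ : V4) : ℂ :=
  ∫ x : V4, g x * Complex.exp (-Complex.I * (minkB ξ x : ℂ))

/-! The phase `e^{-iB(x,y)}` has modulus one and, `Θ` being invertible, `x ↦ f(z + Θx)` is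
integrable, so the double integrand is integrable on `ℝ⁴ × ℝ⁴` and Fubini applies. Translating
`y ↦ y - z` in the inner integral turns it into `(Fg)(x) e^{iB(x,z)}`, because `B(x, ·)` is
additive. -/

theorem MeasureTheory.Integrable.comp_linearMap_of_det_ne_zero {E F : Type*}
    [NormedAddCommGroup E] [NormedSpace ℝ E] [MeasurableSpace E] [BorelSpace E]
    [FiniteDimensional ℝ E] {μ : Measure E} [μ.IsAddHaarMeasure] [NormedAddCommGroup F]
    {g : E → F} (hg : Integrable g μ) {A : E →ₗ[ℝ] E} (hA : LinearMap.det A ≠ 0) :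
    Integrable (fun x => g (A x)) μ := by
  have hmap := Measure.map_linearMap_addHaar_eq_smul_addHaar μ hA
  refine Integrable.comp_measurable (g := g) ?_ A.continuous_of_finiteDimensional.measurable
  rw [hmap]
  exact hg.smul_measure ENNReal.ofReal_ne_top

theorem thetaAct_eq_toLpLin (Θ : Matrix (Fin 4) (Fin 4) ℝ) :
    thetaAct Θ = Matrix.toLpLin 2 2 Θ := by
  ext x i
  simp [thetaAct, Matrix.toLpLin_apply, Matrix.mulVec, dotProduct]

theorem integrable_comp_thetaAct {Θ : Matrix (Fin 4) (Fin 4) ℝ} (hΘ : IsUnit Θ)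
    {F : V4 → ℂ} (hF : Integrable F) : Integrable (fun x => F (thetaAct Θ x)) := by
  have hdet : LinearMap.det (Matrix.toLpLin 2 2 Θ) ≠ 0 := by
    rw [Matrix.toLpLin_eq_toLin, LinearMap.det_toLin]
    exact (Matrix.isUnit_iff_isUnit_det Θ).1 hΘ |>.ne_zero
  simpa [thetaAct_eq_toLpLin] using hF.comp_linearMap_of_det_ne_zero hdet

open Complex in
theorem MeasureTheory.Integrable.mul_prod_mul_cexp_neg_I_mul {α β : Type*}
    [MeasurableSpace α] [MeasurableSpace β] {μ : Measure α} {ν : Measure β} [SFinite ν]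
    {f : α → ℂ} {g : β → ℂ} (hf : Integrable f μ) (hg : Integrable g ν)
    {φ : α × β → ℝ} (hφ : Measurable φ) :
    Integrable (fun p => f p.1 * g p.2 * exp (-I * φ p)) (μ.prod ν) := by
  refine (hf.mul_prod hg).mul_bdd (c := 1) (by fun_prop) (.of_forall fun p => ?_)
  rw [neg_mul, ← mul_neg, ← ofReal_neg, norm_exp_I_mul_ofReal]

open Complex in
theorem integral_add_left_mul_cexp_neg_I_mul {G : Type*} [AddGroup G] [MeasurableSpace G]
    [MeasurableAdd G] (μ : Measure G) [μ.IsAddLeftInvariant] (g : G → ℂ) {L : G → ℝ}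
    (hL : ∀ a b, L (a + b) = L a + L b) (z : G) :
    ∫ y, g (z + y) * exp (-I * L y) ∂μ = (∫ u, g u * exp (-I * L u) ∂μ) * exp (I * L z) := by
  have hshift : ∀ y, g (z + y) * exp (-I * L y)
      = g (z + y) * exp (-I * L (z + y)) * exp (I * L z) := by
    intro y
    rw [mul_assoc, ← exp_add, hL]
    push_cast
    ring_nf
  simp_rw [hshift]
  rw [integral_mul_const, integral_add_left_eq_self (μ := μ) (fun u => g u * exp (-I * L u)) z]

theorem minkB_add_right (x y y' : V4) : minkB x (y + y') = minkB x y + minkB x y' := by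
  simp only [minkB, PiLp.add_apply]
  ring

theorem continuous_minkB : Continuous fun p : V4 × V4 => minkB p.1 p.2 := by
  unfold minkB
  fun_prop

theorem integral_add_left_mul_cexp_minkB (g : V4 → ℂ) (x z : V4) :
    ∫ y, g (z + y) * Complex.exp (-Complex.I * minkB x y)
      = minkFT g x * Complex.exp (Complex.I * minkB x z) :=
  integral_add_left_mul_cexp_neg_I_mul (volume : Measure V4) g (minkB_add_right x) z

theorem rieffel_single_integral_general (Θ : Matrix (Fin 4) (Fin 4) ℝ)
    (hinv : IsUnit Θ)
    (f g : SchwartzMap V4 ℂ) (z : V4) :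
    Integrable (fun η : V4 =>
      f (z + thetaAct Θ η) * minkFT (⇑g) η * Complex.exp (Complex.I * (minkB η z : ℂ))) ∧
    rieffel Θ (⇑f) (⇑g) z =
      c4 * ∫ η : V4, f (z + thetaAct Θ η) * minkFT (⇑g) η *
        Complex.exp (Complex.I * (minkB η z : ℂ)) := by
  have hF : Integrable fun x => f (z + thetaAct Θ x) :=
    integrable_comp_thetaAct hinv (f.integrable.comp_add_left z)
  have hG : Integrable fun y => g (z + y) := g.integrable.comp_add_left z
  have hprod := hF.mul_prod_mul_cexp_neg_I_mul hG continuous_minkB.measurable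
  rw [← Measure.volume_eq_prod] at hprod
  have hinner : ∀ x, ∫ y, f (z + thetaAct Θ x) * g (z + y) * Complex.exp (-Complex.I * minkB x y)
      = f (z + thetaAct Θ x) * minkFT g x * Complex.exp (Complex.I * minkB x z) := by
    intro x
    simp_rw [mul_assoc]
    rw [integral_const_mul, integral_add_left_mul_cexp_minkB]
  refine ⟨hprod.integral_prod_left.congr (.of_forall hinner), ?_⟩
  rw [rieffel, Measure.volume_eq_prod, integral_prod _ hprod]
  simp_rw [hinner]

/-- single-integral (momentum-space in the second factor) representation of the
Rieffel product: (f ×_Θ g)(z) = (2π)⁻⁴ ∫ f(z+Θη) (Fg)(η) e^{i B(η,z)} dη, with the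
right-hand integrand absolutely integrable. -/
theorem rieffel_single_integral (Θ : Matrix (Fin 4) (Fin 4) ℝ)
    (hinv : IsUnit Θ) (hskew : Θᵀ = -Θ)
    (f g : SchwartzMap V4 ℂ) (z : V4) :
    Integrable (fun η : V4 =>
      f (z + thetaAct Θ η) * minkFT (⇑g) η * Complex.exp (Complex.I * (minkB η z : ℂ))) ∧
    rieffel Θ (⇑f) (⇑g) z =
      c4 * ∫ η : V4, f (z + thetaAct Θ η) * minkFT (⇑g) η *
        Complex.exp (Complex.I * (minkB η z : ℂ)) :=
  rieffel_single_integral_general Θ hinv f g z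
end
end

section
/- The Rieffel product has the correct commutative limit: let Θ be an invertible skew-symmetric real 4×4 matrix and let f, g : ℝ⁴ → ℂ be Schwartz functions. Then for every z ∈ ℝ⁴, lim_{t→0⁺} (f ×_{tΘ} g)(z) = f(z)·g(z), where for each t > 0 the matrix tΘ is invertible and skew-symmetric so that f ×_{tΘ} g is given by the absolutely convergent double integral. -/
noncomputable section

open MeasureTheory Filter Matrix

open scoped RealInnerProductSpace FourierTransform
open Real SchwartzMap Topology Filter

/-!
Integrating out `y` first gives `(f ×_Θ g)(z) = (2π)⁻⁴ ∫ f(z + Θx) (F g_z)(x) dx`, where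
`g_z = g(z + ·)` and `F` is the Minkowski Fourier transform, i.e. the Euclidean Fourier transform
evaluated at `Jx / 2π` with `J = diag(-1, 1, 1, 1)`. Replacing `Θ` by `tΘ`, dominated convergence
(`f` is bounded, `F g_z` integrable) sends this to `(2π)⁻⁴ f(z) ∫ F g_z` as `t → 0`, and Fourier
inversion at `0` evaluates that integral to `(2π)⁴ g(z)`.
-/

theorem tendsto_integral_comp_add_smul_mul {α E 𝕜 : Type*} [MeasurableSpace α] {μ : Measure α}
    [NormedAddCommGroup E] [NormedSpace ℝ E] [RCLike 𝕜] {f : E → 𝕜} {C : ℝ}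
    (hf : Continuous f) (hfC : ∀ x, ‖f x‖ ≤ C) {v : α → E} (hv : AEStronglyMeasurable v μ)
    {h : α → 𝕜} (hh : Integrable h μ) (z : E) :
    Tendsto (fun t : ℝ => ∫ x, f (z + t • v x) * h x ∂μ) (𝓝 0) (𝓝 (f z * ∫ x, h x ∂μ)) := by
  rw [← integral_const_mul]
  refine tendsto_integral_filter_of_dominated_convergence (fun x => C * ‖h x‖)
    (.of_forall fun t => ?_) (.of_forall fun t => .of_forall fun x => ?_) (hh.norm.const_mul C)
    (.of_forall fun x => ?_)
  · exact (hf.comp_aestronglyMeasurable ((hv.const_smul t).const_add z)).mul hh.1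
  · rw [norm_mul]
    exact mul_le_mul_of_nonneg_right (hfC _) (norm_nonneg _)
  · exact (by fun_prop : Continuous fun t : ℝ => f (z + t • v x) * h x).tendsto' 0 _ (by simp)

theorem SchwartzMap.integral_fourier {V E : Type*} [NormedAddCommGroup V] [InnerProductSpace ℝ V]
    [FiniteDimensional ℝ V] [MeasurableSpace V] [BorelSpace V] [NormedAddCommGroup E]
    [NormedSpace ℂ E] [CompleteSpace E] (ψ : 𝓢(V, E)) : ∫ w, 𝓕 (⇑ψ) w = ψ 0 := by
  have := congr($(FourierTransform.fourierInv_fourier_eq (F := 𝓢(V, E)) ψ) 0)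
  rw [fourierInv_coe, fourier_coe, Real.fourierInv_eq] at this
  simpa only [inner_zero_right, AddChar.map_zero_eq_one, one_smul] using this

lemma thetaAct_eq (Θ : Matrix (Fin 4) (Fin 4) ℝ) :
    thetaAct Θ = Matrix.toEuclideanCLM (𝕜 := ℝ) Θ := by
  ext x i
  simp [thetaAct, Matrix.mulVec, dotProduct]

lemma continuous_thetaAct (Θ : Matrix (Fin 4) (Fin 4) ℝ) : Continuous (thetaAct Θ) := by
  rw [thetaAct_eq]
  exact ContinuousLinearMap.continuous _

lemma exists_continuousLinearEquiv_thetaAct {Θ : Matrix (Fin 4) (Fin 4) ℝ} (hΘ : IsUnit Θ) :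
    ∃ L : V4 ≃L[ℝ] V4, ⇑L = thetaAct Θ :=
  ⟨ContinuousLinearEquiv.unitsEquiv ℝ V4 (hΘ.map (Matrix.toEuclideanCLM (𝕜 := ℝ))).unit,
    by rw [thetaAct_eq]; rfl⟩

lemma integrable_comp_add_thetaAct {Θ : Matrix (Fin 4) (Fin 4) ℝ} (hΘ : IsUnit Θ)
    (f : 𝓢(V4, ℂ)) (z : V4) : Integrable fun x => f (z + thetaAct Θ x) := by
  obtain ⟨L, hL⟩ := exists_continuousLinearEquiv_thetaAct hΘ
  simpa [← hL, add_comm, Function.comp_def] using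
    (compCLMOfContinuousLinearEquiv ℝ L (compSubConstCLM ℝ (-z) f)).integrable (μ := volume)

lemma thetaAct_smul (t : ℝ) (Θ : Matrix (Fin 4) (Fin 4) ℝ) (x : V4) :
    thetaAct (t • Θ) x = t • thetaAct Θ x := by
  simp [thetaAct_eq]

def minkJ : V4 ≃ₗᵢ[ℝ] V4 :=
  .piLpCongrRight 2 fun i => if i = 0 then .neg ℝ else .refl ℝ ℝ

lemma minkB_eq_inner (x y : V4) : minkB x y = ⟪minkJ x, y⟫ := by
  have hJ (i : Fin 4) : minkJ x i = if i = 0 then -x i else x i := by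
    by_cases h : i = 0 <;> simp [minkJ, h]
  simp [minkB, PiLp.inner_apply, Fin.sum_univ_four, hJ]
  ring

lemma minkFT_eq_fourier (ψ : V4 → ℂ) (x : V4) :
    minkFT ψ x = 𝓕 ψ ((2 * π)⁻¹ • minkJ x) := by
  rw [minkFT, Real.fourier_eq']
  congr 1 with y
  rw [mul_comm, real_inner_smul_right, real_inner_comm, ← minkB_eq_inner, smul_eq_mul]
  push_cast
  field_simp

lemma integrable_minkFT (ψ : 𝓢(V4, ℂ)) : Integrable (minkFT ψ) := by
  have h := ((𝓕 ψ).integrable (μ := volume)).comp_smul (inv_ne_zero two_pi_pos.ne')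
  rw [fourier_coe] at h
  simp_rw [funext (minkFT_eq_fourier ψ)]
  exact (minkJ.measurePreserving.integrable_comp h.aestronglyMeasurable).2 h

lemma c4_mul_integral_minkFT (ψ : 𝓢(V4, ℂ)) : c4 * ∫ x, minkFT ψ x = ψ 0 := by
  simp_rw [minkFT_eq_fourier]
  rw [minkJ.measurePreserving.integral_comp minkJ.toHomeomorph.measurableEmbedding
    (fun w => 𝓕 (⇑ψ) ((2 * π)⁻¹ • w)), Measure.integral_comp_inv_smul_of_nonneg _ _ two_pi_pos.le,
    finrank_euclideanSpace_fin, ψ.integral_fourier, c4, Complex.real_smul, ← mul_assoc]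
  push_cast
  field_simp

lemma rieffel_eq_integral_mul_minkFT {Θ : Matrix (Fin 4) (Fin 4) ℝ} (hΘ : IsUnit Θ)
    (f g : 𝓢(V4, ℂ)) (z : V4) :
    rieffel Θ f g z = c4 * ∫ x, f (z + thetaAct Θ x) * minkFT (fun y => g (z + y)) x := by
  have hphase : Continuous fun p : V4 × V4 => Complex.exp (-Complex.I * (minkB p.1 p.2 : ℂ)) := by
    unfold minkB; fun_prop
  have hint := ((integrable_comp_add_thetaAct hΘ f z).mul_prod
    (g.integrable.comp_add_left (μ := volume) z)).mul_bdd hphase.aestronglyMeasurable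
    (c := 1) (.of_forall fun p => by simp [Complex.norm_exp])
  rw [rieffel, Measure.volume_eq_prod, integral_prod _ hint]
  simp_rw [mul_assoc, integral_const_mul, minkFT]

theorem rieffel_commutative_limit_general (Θ : Matrix (Fin 4) (Fin 4) ℝ)
    (hinv : IsUnit Θ)
    (f g : SchwartzMap V4 ℂ) (z : V4) :
    Tendsto (fun t : ℝ => rieffel (t • Θ) (⇑f) (⇑g) z)
      (nhdsWithin 0 (Set.Ioi 0)) (nhds (f z * g z)) := by
  set ψ : 𝓢(V4, ℂ) := compSubConstCLM ℝ (-z) g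
  have hψ : (fun y => g (z + y)) = ψ := by ext y; simp [ψ, add_comm]
  have hψ0 : ψ 0 = g z := by simp [ψ]
  have hlim := ((tendsto_integral_comp_add_smul_mul f.continuous (norm_le_seminorm ℝ f)
    (continuous_thetaAct Θ).aestronglyMeasurable (integrable_minkFT ψ) z).const_mul c4).mono_left
    (nhdsWithin_le_nhds (s := Set.Ioi 0))
  rw [mul_left_comm, c4_mul_integral_minkFT, hψ0] at hlim
  refine hlim.congr' ?_
  filter_upwards [self_mem_nhdsWithin] with t (ht : 0 < t)
  have htΘ : IsUnit (t • Θ) := hinv.smul (Units.mk0 t ht.ne')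
  rw [rieffel_eq_integral_mul_minkFT htΘ, hψ]
  simp_rw [thetaAct_smul]

/-- commutative limit of the Rieffel product: (f ×_{tΘ} g)(z) → f(z)·g(z)
as t → 0⁺. -/
theorem rieffel_commutative_limit (Θ : Matrix (Fin 4) (Fin 4) ℝ)
    (hinv : IsUnit Θ) (hskew : Θᵀ = -Θ)
    (f g : SchwartzMap V4 ℂ) (z : V4) :
    Tendsto (fun t : ℝ => rieffel (t • Θ) (⇑f) (⇑g) z)
      (nhdsWithin 0 (Set.Ioi 0)) (nhds (f z * g z)) :=
  rieffel_commutative_limit_general Θ hinv f g z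
end
end
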